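/- Let R be a ring with a ℤ-grading 𝒜. The following are equivalent: (1) R is strongly ℤ-graded, i.e. 𝒜 i * 𝒜 j = 𝒜 (i+j) for all i, j ∈ ℤ; (2) for every k ∈ ℤ there is a partition of unity of type (k, −k), i.e. (1 : R) ∈ 𝒜 k * 𝒜 (−k); (3) (1 : R) ∈ 𝒜 1 * 𝒜 (−1) and (1 : R) ∈ 𝒜 (−1) * 𝒜 1. -/

import Mathlib

/-- A ℤ-graded ring is *strongly graded* if `𝒜 i * 𝒜 j = 𝒜 (i + j)` for all `i j`. -/
def IsStronglyGraded {R : Type*} [Ring R] (𝒜 : ℤ → Submodule ℤ R) : Prop :=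
  ∀ i j : ℤ, 𝒜 i * 𝒜 j = 𝒜 (i + j)

/-!
A partition of unity of type `(k, -k)` is the statement `1 ≤ 𝒜 k * 𝒜 (-k)` in the ordered
semiring of submodules. Inserting one of type `(b, -b)` between `𝒜 a` and `𝒜 (-a)` shows that
the degrees admitting one form an additive submonoid, so for `ℤ` the degrees `1` and `-1`
generate all of them. Conversely, `1 ≤ 𝒜 (-j) * 𝒜 j` gives
`𝒜 (i + j) ≤ 𝒜 (i + j) * (𝒜 (-j) * 𝒜 j) ≤ 𝒜 i * 𝒜 j`.
-/

namespace SetLike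

variable {ι S R : Type*} [AddGroup ι] [CommSemiring S] [Semiring R] [Algebra S R]
  (𝒜 : ι → Submodule S R) [GradedMonoid 𝒜]

theorem mul_le_graded (i j : ι) : 𝒜 i * 𝒜 j ≤ 𝒜 (i + j) :=
  Submodule.mul_le.2 fun _ hx _ hy => mul_mem_graded hx hy

theorem mul_eq_graded_of_one_mem_mul {j : ι} (hj : (1 : R) ∈ 𝒜 (-j) * 𝒜 j) (i : ι) :
    𝒜 i * 𝒜 j = 𝒜 (i + j) := by
  refine le_antisymm (mul_le_graded 𝒜 i j) ?_
  calc 𝒜 (i + j) ≤ 𝒜 (i + j) * (𝒜 (-j) * 𝒜 j) := le_mul_of_one_le_right' (Submodule.one_le.2 hj)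
    _ = 𝒜 (i + j) * 𝒜 (-j) * 𝒜 j := (mul_assoc _ _ _).symm
    _ ≤ 𝒜 (i + j + -j) * 𝒜 j := by gcongr; exact mul_le_graded 𝒜 _ _
    _ = 𝒜 i * 𝒜 j := by rw [add_neg_cancel_right]

theorem one_le_mul_neg_add {a b : ι} (ha : 1 ≤ 𝒜 a * 𝒜 (-a)) (hb : 1 ≤ 𝒜 b * 𝒜 (-b)) :
    1 ≤ 𝒜 (a + b) * 𝒜 (-(a + b)) :=
  calc 1 ≤ 𝒜 a * 𝒜 (-a) := ha
    _ = 𝒜 a * 1 * 𝒜 (-a) := by rw [mul_one]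
    _ ≤ 𝒜 a * (𝒜 b * 𝒜 (-b)) * 𝒜 (-a) := by gcongr
    _ = 𝒜 a * 𝒜 b * (𝒜 (-b) * 𝒜 (-a)) := by simp only [mul_assoc]
    _ ≤ 𝒜 (a + b) * 𝒜 (-b + -a) := by gcongr <;> exact mul_le_graded 𝒜 _ _
    _ = 𝒜 (a + b) * 𝒜 (-(a + b)) := by rw [neg_add_rev]

def partitionOfUnityDegrees : AddSubmonoid ι where
  carrier := {k | (1 : R) ∈ 𝒜 k * 𝒜 (-k)}
  zero_mem' := by
    show (1 : R) ∈ 𝒜 0 * 𝒜 (-0)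
    simpa only [neg_zero, mul_one] using
      Submodule.mul_mem_mul (one_mem_graded 𝒜) (one_mem_graded 𝒜)
  add_mem' ha hb := Submodule.one_le.1 <|
    one_le_mul_neg_add 𝒜 (Submodule.one_le.2 ha) (Submodule.one_le.2 hb)

theorem mem_partitionOfUnityDegrees {k : ι} :
    k ∈ partitionOfUnityDegrees 𝒜 ↔ (1 : R) ∈ 𝒜 k * 𝒜 (-k) :=
  Iff.rfl

end SetLike

theorem AddSubmonoid.eq_top_of_one_mem_of_neg_one_mem {M : AddSubmonoid ℤ} (h₁ : 1 ∈ M)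
    (hneg : -1 ∈ M) : M = ⊤ := by
  refine (AddSubmonoid.eq_top_iff' M).2 fun k => ?_
  induction k using Int.induction_on with
  | zero => exact M.zero_mem
  | succ n ih => exact M.add_mem ih h₁
  | pred n ih => simpa only [sub_eq_add_neg] using M.add_mem ih hneg

theorem strongly_graded_tfae {R : Type*} [Ring R] (𝒜 : ℤ → Submodule ℤ R) [GradedRing 𝒜] :
    List.TFAE
      [IsStronglyGraded 𝒜,
       ∀ k : ℤ, (1 : R) ∈ 𝒜 k * 𝒜 (-k),
       (1 : R) ∈ 𝒜 1 * 𝒜 (-1) ∧ (1 : R) ∈ 𝒜 (-1) * 𝒜 1] := by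
  tfae_have 1 → 2 := fun h k => by
    simpa only [h k (-k), add_neg_cancel] using SetLike.one_mem_graded 𝒜
  tfae_have 2 → 3 := fun h => ⟨h 1, by simpa only [neg_neg] using h (-1)⟩
  tfae_have 3 → 2 := fun ⟨h₁, hneg⟩ k => by
    have h_top : SetLike.partitionOfUnityDegrees 𝒜 = ⊤ :=
      AddSubmonoid.eq_top_of_one_mem_of_neg_one_mem h₁
        ((SetLike.mem_partitionOfUnityDegrees 𝒜).2 (by simpa only [neg_neg] using hneg))
    exact (SetLike.mem_partitionOfUnityDegrees 𝒜).1 (h_top ▸ AddSubmonoid.mem_top k)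
  tfae_have 2 → 1 := fun h i j =>
    SetLike.mul_eq_graded_of_one_mem_mul 𝒜 (by simpa only [neg_neg] using h (-j)) i
  tfae_finish
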